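/- Under within-type exchangeability, for all times 0 ≤ s ≤ τ and all count vectors l ≤ m (componentwise) with 0 ≤ m_k ≤ n_k and 0 ≤ l_k ≤ m_k: P( T > s, T ≤ τ, and for every k: C_k(s) = m_k and C_k(τ) = l_k ) = [ Φ(m_1,…,m_L) − Φ(l_1,…,l_L) ] · (∏_{k=1}^L C(n_k, m_k) C(m_k, l_k)) · P( for each k: T^{(k)}_r > τ for 1 ≤ r ≤ l_k, s < T^{(k)}_r ≤ τ for l_k < r ≤ m_k, and T^{(k)}_r ≤ s for m_k < r ≤ n_k ). -/

import Mathlib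

open MeasureTheory Finset

/-- The survival signature of a structure function `φ`:
`Φ(c) = (∏_k C(n_k, c_k))⁻¹ · Σ_{x : exactly c_k working components of each type k} φ(x)`. -/
noncomputable def survSig {L : ℕ} (n : Fin L → ℕ)
    (φ : ((l : Fin L) → Fin (n l) → Bool) → Bool) (c : Fin L → ℕ) : ℝ :=
  (∑ x : (l : Fin L) → Fin (n l) → Bool,
      if (∀ l, (Finset.univ.filter fun j => x l j = true).card = c l) ∧ φ x = true
      then (1 : ℝ) else 0)
    / ∏ l, (Nat.choose (n l) (c l) : ℝ)

/-!
Write `X(t)` for the vector of component states at time `t`. Since `s ≤ τ`, the event on the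
left is the disjoint union of the events `{X(s) = a, X(τ) = b}` over the pairs with `b ≤ a`,
`m_k` resp. `l_k` working components of type `k` in `a` resp. `b`, `φ a = 1` and `φ b = 0`.
A permutation within each type carries such a pair to the ordered configuration, so by
exchangeability each of these events is as likely as the ordered one. Since `φ` is monotone,
the pairs are those with `φ a = 1` minus those with `φ b = 1`, which number
`Φ(m) C(n,m) C(m,l)` and `Φ(l) C(n,l) C(n-l,m-l) = Φ(l) C(n,m) C(m,l)`.
-/

@[simps apply]
def boolFunEquivFinset {ι : Type*} [Fintype ι] [DecidableEq ι] : (ι → Bool) ≃ Finset ι where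
  toFun a := {j | a j = true}
  invFun t j := decide (j ∈ t)
  left_inv a := by ext j; simp
  right_inv t := by ext j; simp

lemma Pi.bool_le_iff_filter_subset {ι : Type*} [Fintype ι] (a b : ι → Bool) :
    a ≤ b ↔ ({j | a j = true} : Finset ι) ⊆ ({j | b j = true} : Finset ι) := by
  simp [Pi.le_def, Bool.le_iff_imp, subset_iff]

lemma card_filter_pi {ι : Type*} [Fintype ι] [DecidableEq ι] {κ : ι → Type*}
    [∀ i, Fintype (κ i)] (Q : ∀ i, κ i → Prop) [∀ i, DecidablePred (Q i)] :
    #{x : ∀ i, κ i | ∀ i, Q i (x i)} = ∏ i, #{y | Q i y} := by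
  rw [← Fintype.card_piFinset]
  congr 1
  ext x
  simp

lemma card_filter_prod_eq_mul {α β : Type*} [Fintype α] [Fintype β] (P : α → Prop)
    (R : α → β → Prop) [DecidablePred P] [∀ a, DecidablePred (R a)] {c : ℕ}
    (hc : ∀ a, P a → #{b | R a b} = c) :
    #{p : α × β | P p.1 ∧ R p.1 p.2} = #{a | P a} * c := by
  rw [card_filter, Fintype.sum_prod_type, card_filter, sum_mul]
  refine sum_congr rfl fun a _ => ?_
  by_cases ha : P a
  · simp only [ha, true_and, if_true, one_mul]
    rw [← hc a ha, card_filter]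
  · simp [ha]

lemma Tuple.apply_sort_le_iff {N : ℕ} {α : Type*} [LinearOrder α] (g : Fin N → α) (c : α)
    (j : Fin N) : g (Tuple.sort g j) ≤ c ↔ (j : ℕ) < #{i | g i ≤ c} := by
  refine (Tuple.lt_card_le_iff_apply_le_of_monotone (a := c) (j := j)
    (Tuple.monotone_sort g)).symm.trans ?_
  rw [card_equiv (Tuple.sort g) (t := {i | g i ≤ c}) fun i => by simp]

lemma exists_perm_apply_eq_decide_lt {N : ℕ} {a b : Fin N → Bool} (hba : b ≤ a) :
    ∃ σ : Equiv.Perm (Fin N), (∀ j, a (σ j) = decide ((j : ℕ) < #{i | a i = true}))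
      ∧ ∀ j, b (σ j) = decide ((j : ℕ) < #{i | b i = true}) := by
  -- sorting by this level lists the components of `b` first, then the rest of `a`
  let g : Fin N → ℕ := fun j => if b j then 0 else if a j then 1 else 2
  have ha : ∀ j, a j = true ↔ g j ≤ 1 := fun j => by
    have hbaj := hba j
    simp only [g]
    revert hbaj
    cases a j <;> cases b j <;> simp
  have hb : ∀ j, b j = true ↔ g j ≤ 0 := fun j => by
    simp only [g]
    cases a j <;> cases b j <;> simp
  refine ⟨Tuple.sort g, fun j => ?_, fun j => ?_⟩
  · rw [Bool.eq_iff_iff, decide_eq_true_iff, ha, Tuple.apply_sort_le_iff,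
      filter_congr fun i _ => ha i]
  · rw [Bool.eq_iff_iff, decide_eq_true_iff, hb, Tuple.apply_sort_le_iff,
      filter_congr fun i _ => hb i]

section Counting

open Classical

variable {ι : Type*} [Fintype ι] [DecidableEq ι]

lemma card_filter_le_and_card_eq (a : ι → Bool) (l : ℕ) :
    #{b : ι → Bool | b ≤ a ∧ #{j | b j = true} = l} = (#{j | a j = true}).choose l := by
  rw [← card_powersetCard]
  exact card_equiv boolFunEquivFinset fun b => by
    simp only [mem_filter, mem_univ, true_and, mem_powersetCard, Pi.bool_le_iff_filter_subset,
      boolFunEquivFinset_apply]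

lemma card_filter_ge_and_card_eq (b : ι → Bool) {m : ℕ} (hm : #{j | b j = true} ≤ m) :
    #{a : ι → Bool | b ≤ a ∧ #{j | a j = true} = m}
      = (Fintype.card ι - #{j | b j = true}).choose (m - #{j | b j = true}) := by
  rw [← card_univ, ← card_filter_powersetCard_subset _ univ m (subset_univ _) hm]
  exact card_equiv boolFunEquivFinset fun a => by
    simp only [mem_filter, mem_univ, true_and, mem_powersetCard, subset_univ,
      Pi.bool_le_iff_filter_subset, boolFunEquivFinset_apply, and_comm]

variable {κ : ι → Type*} [∀ i, Fintype (κ i)]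

def HasCounts (x : ∀ i, κ i → Bool) (c : ι → ℕ) : Prop := ∀ i, #{j | x i j = true} = c i

instance (x : ∀ i, κ i → Bool) (c : ι → ℕ) : Decidable (HasCounts x c) :=
  Fintype.decidableForallFintype

variable [∀ i, DecidableEq (κ i)]

lemma card_filter_le_hasCounts {a : ∀ i, κ i → Bool} {m : ι → ℕ} (ha : HasCounts a m)
    (l : ι → ℕ) : #{b | b ≤ a ∧ HasCounts b l} = ∏ i, (m i).choose (l i) := by
  rw [← prod_congr rfl fun i _ => (ha i) ▸ card_filter_le_and_card_eq (a i) (l i),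
    ← card_filter_pi]
  congr 1
  ext b
  simp only [mem_filter, mem_univ, true_and]
  exact forall_and.symm

lemma card_filter_ge_hasCounts {b : ∀ i, κ i → Bool} {l m : ι → ℕ} (hb : HasCounts b l)
    (hlm : l ≤ m) :
    #{a | b ≤ a ∧ HasCounts a m} = ∏ i, (Fintype.card (κ i) - l i).choose (m i - l i) := by
  rw [← prod_congr rfl fun i _ =>
      (hb i) ▸ card_filter_ge_and_card_eq (b i) ((hb i).trans_le (hlm i)), ← card_filter_pi]
  congr 1
  ext a
  simp only [mem_filter, mem_univ, true_and]
  exact forall_and.symm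

noncomputable def countPairs (m l : ι → ℕ) : Finset ((∀ i, κ i → Bool) × (∀ i, κ i → Bool)) :=
  {p | p.2 ≤ p.1 ∧ HasCounts p.1 m ∧ HasCounts p.2 l}

noncomputable def transitions (φ : (∀ i, κ i → Bool) → Bool) (m l : ι → ℕ) :
    Finset ((∀ i, κ i → Bool) × (∀ i, κ i → Bool)) :=
  {p ∈ countPairs m l | φ p.1 = true ∧ φ p.2 = false}

lemma mem_countPairs {m l : ι → ℕ} {p : (∀ i, κ i → Bool) × (∀ i, κ i → Bool)} :
    p ∈ countPairs m l ↔ p.2 ≤ p.1 ∧ HasCounts p.1 m ∧ HasCounts p.2 l := by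
  simp [countPairs]

lemma transitions_subset_countPairs (φ : (∀ i, κ i → Bool) → Bool) (m l : ι → ℕ) :
    transitions φ m l ⊆ countPairs m l :=
  filter_subset _ _

lemma card_filter_countPairs_fst (ψ : (∀ i, κ i → Bool) → Prop) [DecidablePred ψ] (m l : ι → ℕ) :
    #{p ∈ countPairs m l | ψ p.1} = #{a | HasCounts a m ∧ ψ a} * ∏ i, (m i).choose (l i) := by
  rw [← card_filter_prod_eq_mul (fun a => HasCounts a m ∧ ψ a) (fun a b => b ≤ a ∧ HasCounts b l)
    fun _ ha => card_filter_le_hasCounts ha.1 l]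
  congr 1
  ext p
  simp only [countPairs, mem_filter, mem_univ, true_and]
  tauto

lemma card_filter_countPairs_snd (ψ : (∀ i, κ i → Bool) → Prop) [DecidablePred ψ]
    {m l : ι → ℕ} (hlm : l ≤ m) :
    #{p ∈ countPairs m l | ψ p.2}
      = #{b | HasCounts b l ∧ ψ b} * ∏ i, (Fintype.card (κ i) - l i).choose (m i - l i) := by
  rw [← card_filter_prod_eq_mul (fun b => HasCounts b l ∧ ψ b) (fun b a => b ≤ a ∧ HasCounts a m)
    fun _ hb => card_filter_ge_hasCounts hb.1 hlm]
  refine card_equiv (Equiv.prodComm _ _) fun p => ?_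
  simp only [countPairs, mem_filter, mem_univ, true_and, Equiv.prodComm_apply, Prod.fst_swap,
    Prod.snd_swap]
  tauto

lemma card_transitions_add {φ : (∀ i, κ i → Bool) → Bool} (hφ : Monotone φ) (m l : ι → ℕ) :
    #(transitions φ m l) + #{p ∈ countPairs m l | φ p.2 = true}
      = #{p ∈ countPairs m l | φ p.1 = true} := by
  conv_rhs => rw [← card_filter_add_card_filter_not (fun p => φ p.2 = true), add_comm]
  rw [filter_filter, filter_filter, transitions]
  congr 2 <;> refine filter_congr fun p hp => ?_
  · simp
  · have hle : p.2 ≤ p.1 := (mem_filter.1 hp).2.1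
    exact ⟨fun h2 => ⟨Bool.le_iff_imp.1 (hφ hle) h2, h2⟩, And.right⟩

end Counting

section SurvivalSignature

variable {L : ℕ} {n : Fin L → ℕ}

lemma survSig_mul_prod_choose (φ : ((k : Fin L) → Fin (n k) → Bool) → Bool) {c : Fin L → ℕ}
    (hc : c ≤ n) :
    survSig n φ c * ∏ k, ((n k).choose (c k) : ℝ) = #{x | HasCounts x c ∧ φ x = true} := by
  have hchoose : ∏ k, ((n k).choose (c k) : ℝ) ≠ 0 :=
    prod_ne_zero_iff.2 fun k _ => by exact_mod_cast (Nat.choose_pos (hc k)).ne'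
  rw [survSig, div_mul_cancel₀ _ hchoose, sum_boole]
  congr 2
  exact filter_congr fun x _ => Iff.rfl

lemma card_transitions {φ : ((k : Fin L) → Fin (n k) → Bool) → Bool} (hφ : Monotone φ)
    {l m : Fin L → ℕ} (hlm : l ≤ m) (hm : m ≤ n) :
    (#(transitions φ m l) : ℝ)
      = (survSig n φ m - survSig n φ l) * ∏ k, ((n k).choose (m k) * (m k).choose (l k) : ℝ) := by
  have hsplit := card_transitions_add hφ m l
  have hU := card_filter_countPairs_fst (fun a => φ a = true) m l
  have hD := card_filter_countPairs_snd (fun b => φ b = true) hlm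
  simp only [Fintype.card_fin] at hD
  have hchoose : ∀ k, ((n k).choose (l k) * (n k - l k).choose (m k - l k) : ℝ)
      = (n k).choose (m k) * (m k).choose (l k) := fun k => by
    exact_mod_cast (Nat.choose_mul (hlm k)).symm
  calc (#(transitions φ m l) : ℝ)
      = #{p ∈ countPairs m l | φ p.1 = true} - #{p ∈ countPairs m l | φ p.2 = true} := by
        rw [← hsplit]; push_cast; ring
    _ = survSig n φ m * (∏ k, ((n k).choose (m k) : ℝ)) * ∏ k, ((m k).choose (l k) : ℝ)
          - survSig n φ l * (∏ k, ((n k).choose (l k) : ℝ))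
            * ∏ k, ((n k - l k).choose (m k - l k) : ℝ) := by
        rw [hU, hD, survSig_mul_prod_choose φ hm, survSig_mul_prod_choose φ (hlm.trans hm)]
        push_cast
        ring
    _ = _ := by simp only [mul_assoc, ← prod_mul_distrib, hchoose]; ring

end SurvivalSignature

section Survivors

variable {ι : Type*} {κ : ι → Type*}

noncomputable def survivors (t : ℝ) (x : ∀ i, κ i → ℝ) : ∀ i, κ i → Bool :=
  fun i j => decide (t < x i j)

lemma measurable_survivors (t : ℝ) : Measurable (survivors (κ := κ) t) :=
  measurable_pi_lambda _ fun i => measurable_pi_lambda _ fun j => measurable_to_bool <| by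
    convert measurableSet_lt (measurable_const (a := t))
      (by fun_prop : Measurable fun x : ∀ i, κ i → ℝ => x i j) using 1
    ext x
    simp [survivors]

lemma survivors_antitone {s τ : ℝ} (h : s ≤ τ) (x : ∀ i, κ i → ℝ) :
    survivors τ x ≤ survivors s x := fun i j =>
  Bool.le_iff_imp.2 fun hτ => by
    simp only [survivors, decide_eq_true_eq] at hτ ⊢
    exact h.trans_lt hτ

variable {Ω : Type*} [MeasurableSpace Ω] {P : Measure Ω}

lemma measure_survivors_eq_of_perm [Countable ι] [∀ i, Countable (κ i)]
    {Y : Ω → ∀ i, κ i → ℝ} (hY : Measurable Y) (σ : ∀ i, Equiv.Perm (κ i))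
    (hσ : P.map (fun ω i j => Y ω i (σ i j)) = P.map Y) (s τ : ℝ) (a b : ∀ i, κ i → Bool) :
    P ((fun ω => (survivors s (Y ω), survivors τ (Y ω))) ⁻¹' {(a, b)})
      = P ((fun ω => (survivors s (Y ω), survivors τ (Y ω))) ⁻¹'
          {(fun i => a i ∘ σ i, fun i => b i ∘ σ i)}) := by
  -- relabelling the components commutes with `survivors`, so both events are preimages of `A`
  set A := (fun x => (survivors s x, survivors τ x)) ⁻¹'
    {((fun i => a i ∘ σ i), fun i => b i ∘ σ i)}
  have hA : MeasurableSet A :=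
    ((measurable_survivors s).prodMk (measurable_survivors τ)) (measurableSet_singleton _)
  have hYσ : Measurable fun ω i j => Y ω i (σ i j) := by fun_prop
  have hcomp : ∀ c d : ∀ i, κ i → Bool, (fun i => c i ∘ σ i) = (fun i => d i ∘ σ i) ↔ c = d :=
    fun c d => ⟨fun h => funext fun i => (σ i).surjective.injective_comp_right (congrFun h i),
      fun h => h ▸ rfl⟩
  calc P ((fun ω => (survivors s (Y ω), survivors τ (Y ω))) ⁻¹' {(a, b)})
      = P ((fun ω i j => Y ω i (σ i j)) ⁻¹' A) := by
        congr 1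
        ext ω
        simp only [A, Set.mem_preimage, Set.mem_singleton_iff, Prod.mk.injEq]
        exact (and_congr (hcomp _ _) (hcomp _ _)).symm
    _ = P.map (fun ω i j => Y ω i (σ i j)) A := (Measure.map_apply hYσ hA).symm
    _ = P.map Y A := by rw [hσ]
    _ = _ := Measure.map_apply hY hA

end Survivors

def firstWorking {ι : Type*} (n c : ι → ℕ) : ∀ i, Fin (n i) → Bool :=
  fun i j => decide ((j : ℕ) < c i)

lemma measure_survivors_eq_firstWorking {Ω : Type*} [MeasurableSpace Ω] {P : Measure Ω}
    {ι : Type*} [Fintype ι] [DecidableEq ι] {n : ι → ℕ}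
    {Y : Ω → ∀ i, Fin (n i) → ℝ} (hY : Measurable Y)
    (hexch : ∀ σ : ∀ i, Equiv.Perm (Fin (n i)), P.map (fun ω i j => Y ω i (σ i j)) = P.map Y)
    (s τ : ℝ) {m l : ι → ℕ} {p : (∀ i, Fin (n i) → Bool) × (∀ i, Fin (n i) → Bool)}
    (hp : p ∈ countPairs m l) :
    P ((fun ω => (survivors s (Y ω), survivors τ (Y ω))) ⁻¹' {p})
      = P ((fun ω => (survivors s (Y ω), survivors τ (Y ω))) ⁻¹'
          {(firstWorking n m, firstWorking n l)}) := by
  obtain ⟨hba, ha, hb⟩ := mem_countPairs.1 hp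
  choose σ hσa hσb using fun i => exists_perm_apply_eq_decide_lt (hba i)
  have hσ : ((fun i => p.1 i ∘ σ i), fun i => p.2 i ∘ σ i)
      = (firstWorking n m, firstWorking n l) := by
    ext i j <;> simp [firstWorking, hσa, hσb, ← ha i, ← hb i]
  rw [← hσ]
  exact measure_survivors_eq_of_perm hY σ (hexch σ) s τ p.1 p.2

lemma setOf_eq_preimage_transitions {Ω ι : Type*} [Fintype ι] [DecidableEq ι] {κ : ι → Type*}
    [∀ i, Fintype (κ i)] [∀ i, DecidableEq (κ i)] {T : ∀ i, κ i → Ω → ℝ} {Tsys : Ω → ℝ}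
    {φ : (∀ i, κ i → Bool) → Bool}
    (hT : ∀ t : ℝ, 0 ≤ t → {ω | t < Tsys ω} = {ω | φ (survivors t fun i j => T i j ω) = true})
    {s τ : ℝ} (hs : 0 ≤ s) (hsτ : s ≤ τ) (m l : ι → ℕ) :
    {ω | s < Tsys ω ∧ Tsys ω ≤ τ ∧ ∀ i, #{j | s < T i j ω} = m i ∧ #{j | τ < T i j ω} = l i}
      = (fun ω => (survivors s fun i j => T i j ω, survivors τ fun i j => T i j ω)) ⁻¹'
          transitions φ m l := by
  ext ω
  have hlife : ∀ t, 0 ≤ t → (t < Tsys ω ↔ φ (survivors t fun i j => T i j ω) = true) :=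
    fun t ht => Set.ext_iff.mp (hT t ht) ω
  have hcounts : ∀ t c,
      HasCounts (survivors t fun i j => T i j ω) c ↔ ∀ i, #{j | t < T i j ω} = c i := by
    simp [HasCounts, survivors]
  simp only [Set.mem_ofPred_eq, Set.mem_preimage, mem_coe, transitions, mem_countPairs,
    mem_filter, survivors_antitone hsτ, hcounts, hlife s hs, ← not_lt, hlife τ (hs.trans hsτ),
    Bool.not_eq_true, forall_and]
  tauto

lemma setOf_eq_preimage_firstWorking {Ω ι : Type*} {n : ι → ℕ} {T : ∀ i, Fin (n i) → Ω → ℝ}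
    {s τ : ℝ} (hsτ : s ≤ τ) {m l : ι → ℕ} (hlm : l ≤ m) :
    {ω | ∀ i, ∀ r : Fin (n i), ((r : ℕ) < l i → τ < T i r ω)
        ∧ (l i ≤ (r : ℕ) ∧ (r : ℕ) < m i → s < T i r ω ∧ T i r ω ≤ τ)
        ∧ (m i ≤ (r : ℕ) → T i r ω ≤ s)}
      = (fun ω => (survivors s fun i j => T i j ω, survivors τ fun i j => T i j ω)) ⁻¹'
          {(firstWorking n m, firstWorking n l)} := by
  have hband : ∀ {x : ℝ} {r l m : ℕ}, l ≤ m →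
      (((s < x ↔ r < m) ∧ (τ < x ↔ r < l)) ↔
        ((r < l → τ < x) ∧ (l ≤ r ∧ r < m → s < x ∧ x ≤ τ) ∧ (m ≤ r → x ≤ s))) := by
    grind
  ext ω
  simp only [Set.mem_ofPred_eq, Set.mem_preimage, Set.mem_singleton_iff, Prod.mk.injEq,
    funext_iff, survivors, firstWorking, decide_eq_decide, ← forall_and]
  exact forall_congr' fun i => forall_congr' fun r => (hband (hlm i)).symm

theorem stmt_16_general
    {Ω : Type*} [MeasurableSpace Ω] (P : Measure Ω)
    {L : ℕ} (n : Fin L → ℕ)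
    (T : (k : Fin L) → Fin (n k) → Ω → ℝ)
    (hTmeas : ∀ k j, Measurable (T k j))
    (hexch : ∀ σ : (k : Fin L) → Equiv.Perm (Fin (n k)),
      Measure.map (fun ω (k : Fin L) (j : Fin (n k)) => T k (σ k j) ω) P
        = Measure.map (fun ω (k : Fin L) (j : Fin (n k)) => T k j ω) P)
    (φ : ((k : Fin L) → Fin (n k) → Bool) → Bool) (hφ : Monotone φ)
    (Tsys : Ω → ℝ)
    (hT : ∀ t : ℝ, 0 ≤ t →
      {ω | t < Tsys ω} = {ω | φ (fun k j => decide (t < T k j ω)) = true})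
    (s τ : ℝ) (hs : 0 ≤ s) (hsτ : s ≤ τ)
    (l m : Fin L → ℕ) (hlm : ∀ k, l k ≤ m k) (hm : ∀ k, m k ≤ n k) :
    (P {ω | s < Tsys ω ∧ Tsys ω ≤ τ
        ∧ ∀ k, (Finset.univ.filter fun j : Fin (n k) => s < T k j ω).card = m k
            ∧ (Finset.univ.filter fun j : Fin (n k) => τ < T k j ω).card = l k}).toReal
    = (survSig n φ m - survSig n φ l)
        * (∏ k, (Nat.choose (n k) (m k) : ℝ) * (Nat.choose (m k) (l k) : ℝ))
        * (P {ω | ∀ k, ∀ r : Fin (n k),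
            ((r : ℕ) < l k → τ < T k r ω)
            ∧ (l k ≤ (r : ℕ) ∧ (r : ℕ) < m k → s < T k r ω ∧ T k r ω ≤ τ)
            ∧ (m k ≤ (r : ℕ) → T k r ω ≤ s)}).toReal := by
  have hY : Measurable fun ω (k : Fin L) (j : Fin (n k)) => T k j ω := by fun_prop
  have hZ : Measurable fun ω => (survivors s fun k j => T k j ω, survivors τ fun k j => T k j ω) :=
    ((measurable_survivors s).prodMk (measurable_survivors τ)).comp hY
  rw [setOf_eq_preimage_transitions hT hs hsτ m l, setOf_eq_preimage_firstWorking hsτ hlm,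
    ← sum_measure_preimage_singleton _ fun p _ => hZ (measurableSet_singleton p),
    sum_congr rfl fun p hp => measure_survivors_eq_firstWorking hY hexch s τ
      (transitions_subset_countPairs φ m l hp),
    sum_const, ENNReal.toReal_nsmul, nsmul_eq_mul, card_transitions hφ hlm hm]

/-- Under within-type exchangeability, for `0 ≤ s ≤ τ` and count
vectors `l ≤ m`,
`P(s < T ≤ τ, C_k(s)=m_k, C_k(τ)=l_k ∀k) = [Φ(m) − Φ(l)] ∏_k C(n_k,m_k) C(m_k,l_k) · P(ordered configuration)`. -/
theorem stmt_16
    {Ω : Type*} [MeasurableSpace Ω] (P : Measure Ω) [IsProbabilityMeasure P]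
    {L : ℕ} (hL : 1 ≤ L) (n : Fin L → ℕ) (hn : ∀ k, 1 ≤ n k)
    (T : (k : Fin L) → Fin (n k) → Ω → ℝ)
    (hTmeas : ∀ k j, Measurable (T k j))
    (hexch : ∀ σ : (k : Fin L) → Equiv.Perm (Fin (n k)),
      Measure.map (fun ω (k : Fin L) (j : Fin (n k)) => T k (σ k j) ω) P
        = Measure.map (fun ω (k : Fin L) (j : Fin (n k)) => T k j ω) P)
    (φ : ((k : Fin L) → Fin (n k) → Bool) → Bool) (hφ : Monotone φ)
    (Tsys : Ω → ℝ) (hTsys : Measurable Tsys)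
    (hT : ∀ t : ℝ, 0 ≤ t →
      {ω | t < Tsys ω} = {ω | φ (fun k j => decide (t < T k j ω)) = true})
    (s τ : ℝ) (hs : 0 ≤ s) (hsτ : s ≤ τ)
    (l m : Fin L → ℕ) (hlm : ∀ k, l k ≤ m k) (hm : ∀ k, m k ≤ n k) :
    (P {ω | s < Tsys ω ∧ Tsys ω ≤ τ
        ∧ ∀ k, (Finset.univ.filter fun j : Fin (n k) => s < T k j ω).card = m k
            ∧ (Finset.univ.filter fun j : Fin (n k) => τ < T k j ω).card = l k}).toReal
    = (survSig n φ m - survSig n φ l)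
        * (∏ k, (Nat.choose (n k) (m k) : ℝ) * (Nat.choose (m k) (l k) : ℝ))
        * (P {ω | ∀ k, ∀ r : Fin (n k),
            ((r : ℕ) < l k → τ < T k r ω)
            ∧ (l k ≤ (r : ℕ) ∧ (r : ℕ) < m k → s < T k r ω ∧ T k r ω ≤ τ)
            ∧ (m k ≤ (r : ℕ) → T k r ω ≤ s)}).toReal :=
  stmt_16_general P n T hTmeas hexch φ hφ Tsys hT s τ hs hsτ l m hlm hm
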